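/- Let G₁, G₂ be finite abelian groups with symmetric subsets S₁ ⊆ Ĝ₁ and S₂ ⊆ Ĝ₂. Then the Cayley graph Cay(Ĝ₁ × Ĝ₂, S₁ × S₂) equals the strong product Cay(Ĝ₁, S₁) ⊠ Cay(Ĝ₂, S₂), and consequently if Γ₁ is a chordal cover of Cay(Ĝ₁, S₁) then Γ₁ ⊠ K_{|G₂|} is a chordal cover of Cay(Ĝ₁ × Ĝ₂, S₁ × S₂). -/

import Mathlib

open scoped BigOperators

/-- The Cayley graph of a group with connection set `S`. -/
def cayleyGraph {A : Type*} [Group A] (S : Set A) : SimpleGraph A :=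
  SimpleGraph.fromRel (fun x y => ∃ s ∈ S, x = s * y)

/-- The strong product of two simple graphs. -/
def strongProd {V₁ V₂ : Type*} (Γ₁ : SimpleGraph V₁) (Γ₂ : SimpleGraph V₂) :
    SimpleGraph (V₁ × V₂) where
  Adj a b := (a.1 = b.1 ∧ Γ₂.Adj a.2 b.2) ∨ (Γ₁.Adj a.1 b.1 ∧ a.2 = b.2) ∨
    (Γ₁.Adj a.1 b.1 ∧ Γ₂.Adj a.2 b.2)
  symm := by
    constructor
    rintro a b (⟨h1, h2⟩ | ⟨h1, h2⟩ | ⟨h1, h2⟩)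
    · exact Or.inl ⟨h1.symm, h2.symm⟩
    · exact Or.inr (Or.inl ⟨h1.symm, h2.symm⟩)
    · exact Or.inr (Or.inr ⟨h1.symm, h2.symm⟩)
  loopless := by
    constructor
    rintro a (⟨h1, h2⟩ | ⟨h1, h2⟩ | ⟨h1, h2⟩)
    · exact Γ₂.loopless.irrefl _ h2
    · exact Γ₁.loopless.irrefl _ h1
    · exact Γ₁.loopless.irrefl _ h1

/-- A graph is chordal if every cycle of length at least four has a chord. -/
def IsChordal {V : Type*} (Γ : SimpleGraph V) : Prop :=
  ∀ ⦃v : V⦄ (w : Γ.Walk v v), w.IsCycle → 4 ≤ w.length →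
    ∃ i j : ℕ, i + 2 ≤ j ∧ j < w.length ∧ ¬(i = 0 ∧ j + 1 = w.length) ∧
      Γ.Adj (w.getVert i) (w.getVert j)

lemma strongProd_adj {V₁ V₂ : Type*} (Γ₁ : SimpleGraph V₁) (Γ₂ : SimpleGraph V₂)
    (a b : V₁ × V₂) :
    (strongProd Γ₁ Γ₂).Adj a b ↔ (a.1 = b.1 ∧ Γ₂.Adj a.2 b.2) ∨ (Γ₁.Adj a.1 b.1 ∧ a.2 = b.2) ∨
      (Γ₁.Adj a.1 b.1 ∧ Γ₂.Adj a.2 b.2) := Iff.rfl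

lemma cayleyGraph_adj {A : Type*} [Group A] (S : Set A) (x y : A) :
    (cayleyGraph S).Adj x y ↔ x ≠ y ∧ ((∃ s ∈ S, x = s * y) ∨ ∃ s ∈ S, y = s * x) :=
  SimpleGraph.fromRel_adj _ _ _

lemma cayleyGraph_adj' {A : Type*} [Group A] {S : Set A} (hS : ∀ s ∈ S, s⁻¹ ∈ S) {x y : A}
    (h : (cayleyGraph S).Adj x y) : x ≠ y ∧ ∃ s ∈ S, x = s * y := by
  obtain ⟨hne, h | h⟩ := (cayleyGraph_adj S x y).mp h
  · exact ⟨hne, h⟩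
  · obtain ⟨s, hs, he⟩ := h
    exact ⟨hne, s⁻¹, hS s hs, eq_inv_mul_iff_mul_eq.mpr he.symm⟩

namespace ChordalAux

open SimpleGraph

variable {V : Type*} {Γ : SimpleGraph V}

lemma support_eq_map_getVert {u v : V} (p : Γ.Walk u v) :
    p.support = (List.range (p.length + 1)).map p.getVert := by
  induction p with
  | nil => simp [SimpleGraph.Walk.getVert]
  | @cons u' v' w' h q ih =>
    rw [Walk.support_cons, ih, Walk.length_cons]
    have hr : List.range (q.length + 1 + 1) = 0 :: (List.range (q.length + 1)).map Nat.succ :=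
      List.range_succ_eq_map
    rw [hr, List.map_cons, List.map_map]
    rfl

lemma cycle_getVert_injOn {u : V} {w : Γ.Walk u u} (hw : w.IsCycle) :
    ∀ i j, 1 ≤ i → i ≤ w.length → 1 ≤ j → j ≤ w.length → w.getVert i = w.getVert j → i = j := by
  have hsup := hw.support_nodup
  rw [support_eq_map_getVert, List.range_succ_eq_map, List.map_cons, List.tail_cons,
    List.map_map] at hsup
  intro i j hi hin hj hjn hgv
  have h1 : i - 1 ∈ List.range w.length := List.mem_range.mpr (by omega)
  have h2 : j - 1 ∈ List.range w.length := List.mem_range.mpr (by omega)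
  have key : i - 1 = j - 1 := by
    refine List.inj_on_of_nodup_map hsup h1 h2 ?_
    have e1 : i - 1 + 1 = i := by omega
    have e2 : j - 1 + 1 = j := by omega
    show w.getVert (i - 1 + 1) = w.getVert (j - 1 + 1)
    rw [e1, e2]; exact hgv
  omega

lemma exists_walk_of_seq :
    ∀ (n : ℕ) (a : ℕ → V), (∀ i < n, Γ.Adj (a i) (a (i + 1))) →
      ∃ w : Γ.Walk (a 0) (a n), w.length = n ∧
        w.support = (List.range (n + 1)).map a ∧
        w.edges = (List.range n).map (fun k => s(a k, a (k + 1))) ∧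
        ∀ i ≤ n, w.getVert i = a i := by
  intro n
  induction n with
  | zero =>
    intro a _
    refine ⟨Walk.nil, by simp, by simp [List.range_succ], by simp, ?_⟩
    intro i hi
    interval_cases i
    simp
  | succ m ih =>
    intro a h
    obtain ⟨w', h1, h2, h3, h4⟩ := ih (fun k => a (k + 1)) (fun i hi => h (i + 1) (by omega))
    refine ⟨Walk.cons (h 0 (by omega)) w', by simp [h1], ?_, ?_, ?_⟩
    · rw [Walk.support_cons, h2]
      conv_rhs => rw [List.range_succ_eq_map]
      rw [List.map_cons, List.map_map]
      rfl
    · rw [Walk.edges_cons, h3]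
      conv_rhs => rw [List.range_succ_eq_map]
      rw [List.map_cons, List.map_map]
      rfl
    · intro i hi
      cases i with
      | zero => simp [Walk.getVert_zero]
      | succ k =>
        rw [Walk.getVert_cons_succ]
        exact h4 k (by omega)

lemma seq_chord (hΓ : IsChordal Γ) :
    ∀ n : ℕ, 4 ≤ n → ∀ a : ℕ → V, a n = a 0 →
      (∀ i < n, a i = a (i + 1) ∨ Γ.Adj (a i) (a (i + 1))) →
      ∃ i j, i + 2 ≤ j ∧ j < n ∧ j + 2 ≤ i + n ∧ (a i = a j ∨ Γ.Adj (a i) (a j)) := by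
  intro n
  induction n using Nat.strong_induction_on with
  | _ n IH =>
    intro hn a hcl hR
    by_cases heq : ∃ i j, i + 2 ≤ j ∧ j < n ∧ j + 2 ≤ i + n ∧ a i = a j
    · obtain ⟨i, j, h1, h2, h3, h4⟩ := heq
      exact ⟨i, j, h1, h2, h3, Or.inl h4⟩
    · push_neg at heq
      by_cases hcons : ∃ i < n, a i = a (i + 1)
      · obtain ⟨i, hi, hii⟩ := hcons
        by_cases h4 : n = 4
        · subst h4
          interval_cases i
          · refine ⟨1, 3, by omega, by omega, by omega, ?_⟩
            rcases hR 3 (by omega) with h | h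
            · exact Or.inl (hii.symm.trans (h.trans hcl).symm)
            · right
              rw [← hii]
              rw [hcl] at h
              exact h.symm
          · refine ⟨0, 2, by omega, by omega, by omega, ?_⟩
            rcases hR 0 (by omega) with h | h
            · exact Or.inl (h.trans hii)
            · right; rw [← hii]; exact h
          · refine ⟨1, 3, by omega, by omega, by omega, ?_⟩
            rcases hR 1 (by omega) with h | h
            · exact Or.inl (h.trans hii)
            · right; rw [← hii]; exact h
          · refine ⟨0, 2, by omega, by omega, by omega, ?_⟩
            have h30 : a 3 = a 0 := hii.trans hcl
            rcases hR 2 (by omega) with h | h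
            · exact Or.inl (h.trans h30).symm
            · right
              rw [h30] at h
              exact h.symm
        · obtain ⟨m, rfl⟩ : ∃ m, n = m + 1 := ⟨n - 1, by omega⟩
          obtain ⟨a', ha'⟩ : ∃ a' : ℕ → V, ∀ k, a' k = if k ≤ i then a k else a (k + 1) :=
            ⟨_, fun k => rfl⟩
          have hcl' : a' m = a' 0 := by
            rw [ha' m, ha' 0, if_pos (Nat.zero_le i)]
            by_cases hmi : m ≤ i
            · have him : i = m := by omega
              rw [if_pos hmi]
              rw [him] at hii
              exact hii.trans hcl
            · rw [if_neg hmi]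
              exact hcl
          have hR' : ∀ k < m, a' k = a' (k + 1) ∨ Γ.Adj (a' k) (a' (k + 1)) := by
            intro k hk
            by_cases hk1 : k + 1 ≤ i
            · have e1 : a' k = a k := by rw [ha' k, if_pos (by omega : k ≤ i)]
              have e2 : a' (k + 1) = a (k + 1) := by rw [ha' (k + 1), if_pos hk1]
              rw [e1, e2]
              exact hR k (by omega)
            · by_cases hk0 : k ≤ i
              · have hki : k = i := by omega
                have e1 : a' k = a (k + 1) := by
                  rw [ha' k, if_pos hk0, hki, hii]
                have e2 : a' (k + 1) = a (k + 2) := by rw [ha' (k + 1), if_neg hk1]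
                rw [e1, e2]
                exact hR (k + 1) (by omega)
              · have e1 : a' k = a (k + 1) := by rw [ha' k, if_neg hk0]
                have e2 : a' (k + 1) = a (k + 2) := by rw [ha' (k + 1), if_neg (by omega : ¬ k + 1 ≤ i)]
                rw [e1, e2]
                exact hR (k + 1) (by omega)
          obtain ⟨i', j', p1, p2, p3, p4⟩ := IH m (by omega) (by omega) a' hcl' hR'
          by_cases hi' : i' ≤ i
          · by_cases hj' : j' ≤ i
            · have e1 : a' i' = a i' := by rw [ha' i', if_pos hi']
              have e2 : a' j' = a j' := by rw [ha' j', if_pos hj']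
              rw [e1, e2] at p4
              exact ⟨i', j', p1, by omega, by omega, p4⟩
            · have e1 : a' i' = a i' := by rw [ha' i', if_pos hi']
              have e2 : a' j' = a (j' + 1) := by rw [ha' j', if_neg hj']
              rw [e1, e2] at p4
              exact ⟨i', j' + 1, by omega, by omega, by omega, p4⟩
          · have hj' : ¬ j' ≤ i := by omega
            have e1 : a' i' = a (i' + 1) := by rw [ha' i', if_neg hi']
            have e2 : a' j' = a (j' + 1) := by rw [ha' j', if_neg hj']
            rw [e1, e2] at p4
            exact ⟨i' + 1, j' + 1, by omega, by omega, by omega, p4⟩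
      · push_neg at hcons
        have hAdj : ∀ i < n, Γ.Adj (a i) (a (i + 1)) :=
          fun i hi => (hR i hi).resolve_left (hcons i hi)
        have hpq : ∀ p q, p < q → q ≤ n → a p = a q → p = 0 ∧ q = n := by
          intro p q h1 h2 he
          by_cases hq : q = n
          · refine ⟨?_, hq⟩
            by_contra hp0
            have he0 : a p = a 0 := by rw [he, hq, hcl]
            by_cases hp1 : p = 1
            · have hc := hcons 0 (by omega)
              rw [hp1] at he0
              exact hc he0.symm
            · by_cases hpn : p = n - 1
              · have hc := hcons (n - 1) (by omega)
                have hn1 : n - 1 + 1 = n := by omega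
                rw [hn1, hcl] at hc
                exact hc (hpn ▸ he0)
              · exact heq 0 p (by omega) (by omega) (by omega) he0.symm
          · have hq' : q < n := by omega
            by_cases hq1 : q = p + 1
            · exact absurd he (hq1 ▸ hcons p (by omega))
            · by_cases hp0 : p = 0
              · by_cases hqn1 : q = n - 1
                · have hc := hcons (n - 1) (by omega)
                  have hn1 : n - 1 + 1 = n := by omega
                  rw [hn1, hcl] at hc
                  exact ((hc (by rw [← hqn1, ← he, hp0])).elim :)
                · exact absurd he (heq p q (by omega) hq' (by omega))
              · exact absurd he (heq p q (by omega) hq' (by omega))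
        obtain ⟨w, hlen, hsup, hedg, hgv⟩ := ChordalAux.exists_walk_of_seq n a hAdj
        have hcyc : (w.copy rfl hcl).IsCycle := by
          rw [SimpleGraph.Walk.isCycle_def]
          refine ⟨⟨?_⟩, ?_, ?_⟩
          · rw [Walk.edges_copy, hedg]
            refine (List.nodup_range : (List.range n).Nodup).map_on ?_
            intro k hk l hl hkl
            rw [List.mem_range] at hk hl
            rw [Sym2.eq_iff] at hkl
            rcases hkl with ⟨e1, e2⟩ | ⟨e1, e2⟩
            · rcases Nat.lt_trichotomy k l with h | h | h
              · exact absurd (hpq k l h (by omega) e1).2 (by omega)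
              · exact h
              · exact absurd (hpq l k h (by omega) e1.symm).2 (by omega)
            · rcases Nat.lt_trichotomy k (l + 1) with h | h | h
              · have hk0 := hpq k (l + 1) h (by omega) e1
                have hlp := hpq 1 l (by omega) (by omega)
                  (by have hk00 := hk0.1; subst hk00; exact e2)
                omega
              · have hlp := hpq l (l + 2) (by omega) (by omega)
                  (by rw [show l + 2 = l + 1 + 1 from rfl, ← h]; exact e2.symm)
                omega
              · have hlp := hpq (l + 1) k h (by omega) e1.symm
                omega
          · intro hnil
            have hl := hlen
            have : (w.copy rfl hcl).length = w.length := Walk.length_copy _ _ _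
            rw [hnil] at this
            simp at this
            omega
          · rw [Walk.support_copy, hsup, List.range_succ_eq_map, List.map_cons, List.tail_cons,
              List.map_map]
            refine (List.nodup_range : (List.range n).Nodup).map_on ?_
            intro k hk l hl hkl
            rw [List.mem_range] at hk hl
            rcases Nat.lt_trichotomy k l with h | h | h
            · exact absurd (hpq (k + 1) (l + 1) (by omega) (by omega) hkl).1 (by omega)
            · exact h
            · exact absurd (hpq (l + 1) (k + 1) (by omega) (by omega) hkl.symm).1 (by omega)
        have hclen : (w.copy rfl hcl).length = n := by
          rw [Walk.length_copy]; exact hlen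
        obtain ⟨i, j, h1, h2, h3, h4⟩ := hΓ (w.copy rfl hcl) hcyc (by omega)
        rw [hclen] at h2 h3
        have hgi : (w.copy rfl hcl).getVert i = a i := by
          rw [Walk.getVert_copy]; exact hgv i (by omega)
        have hgj : (w.copy rfl hcl).getVert j = a j := by
          rw [Walk.getVert_copy]; exact hgv j (by omega)
        rw [hgi, hgj] at h4
        refine ⟨i, j, h1, h2, ?_, Or.inr h4⟩
        by_cases hi0 : i = 0
        · have : j + 1 ≠ n := fun h => h3 ⟨hi0, h⟩
          omega
        · omega

lemma strongProd_top_isChordal {V W : Type*} {Γ : SimpleGraph V} (hΓ : IsChordal Γ) :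
    IsChordal (strongProd Γ (⊤ : SimpleGraph W)) := by
  intro v w hcyc hlen
  have hR : ∀ i < w.length, (w.getVert i).1 = (w.getVert (i + 1)).1 ∨
      Γ.Adj (w.getVert i).1 (w.getVert (i + 1)).1 := by
    intro i hi
    rcases (strongProd_adj _ _ _ _).mp (w.adj_getVert_succ hi) with ⟨h1, _⟩ | ⟨h1, _⟩ | ⟨h1, _⟩
    exacts [Or.inl h1, Or.inr h1, Or.inr h1]
  have hcl : (w.getVert w.length).1 = (w.getVert 0).1 := by
    rw [w.getVert_length, w.getVert_zero]
  obtain ⟨i, j, h1, h2, h3, h4⟩ :=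
    seq_chord hΓ w.length hlen (fun i => (w.getVert i).1) hcl hR
  refine ⟨i, j, h1, h2, ?_, ?_⟩
  · rintro ⟨rfl, hj1⟩
    omega
  · rw [strongProd_adj]
    rcases h4 with h4 | h4
    · have hne : w.getVert i ≠ w.getVert j := by
        rcases Nat.eq_zero_or_pos i with rfl | hi
        · have h0 : w.getVert 0 = w.getVert w.length := by
            rw [w.getVert_zero, w.getVert_length]
          rw [h0]
          intro hc
          have := cycle_getVert_injOn hcyc w.length j (by omega) (by omega) (by omega)
            (by omega) hc
          omega
        · intro hc
          have := cycle_getVert_injOn hcyc i j (by omega) (by omega) (by omega) (by omega) hc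
          omega
      exact Or.inl ⟨h4, fun hsnd => hne (Prod.ext_iff.mpr ⟨h4, hsnd⟩)⟩
    · by_cases hsnd : (w.getVert i).2 = (w.getVert j).2
      · exact Or.inr (Or.inl ⟨h4, hsnd⟩)
      · exact Or.inr (Or.inr ⟨h4, hsnd⟩)

end ChordalAux

/-- The Cayley graph of a product of dual groups with connection set `S₁ × S₂` is the
strong product of the two Cayley graphs; consequently the strong product of a chordal
cover of `Cay(Ĝ₁, S₁)` with the complete graph on `Ĝ₂` is a chordal cover of
`Cay(Ĝ₁ × Ĝ₂, S₁ × S₂)`. -/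
theorem cayley_prod_eq_strongProd_and_chordal_cover
    (G₁ G₂ : Type*) [CommGroup G₁] [Fintype G₁] [CommGroup G₂] [Fintype G₂]
    (S₁ : Set (G₁ →* ℂˣ)) (S₂ : Set (G₂ →* ℂˣ))
    (hS₁symm : ∀ s ∈ S₁, s⁻¹ ∈ S₁) (hS₂symm : ∀ s ∈ S₂, s⁻¹ ∈ S₂)
    (hS₁one : (1 : G₁ →* ℂˣ) ∈ S₁) (hS₂one : (1 : G₂ →* ℂˣ) ∈ S₂) :
    cayleyGraph (S₁ ×ˢ S₂) = strongProd (cayleyGraph S₁) (cayleyGraph S₂) ∧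
    ∀ Γ₁ : SimpleGraph (G₁ →* ℂˣ), IsChordal Γ₁ → cayleyGraph S₁ ≤ Γ₁ →
      IsChordal (strongProd Γ₁ (⊤ : SimpleGraph (G₂ →* ℂˣ))) ∧
      cayleyGraph (S₁ ×ˢ S₂) ≤ strongProd Γ₁ (⊤ : SimpleGraph (G₂ →* ℂˣ)) := by
  have hEq : cayleyGraph (S₁ ×ˢ S₂) = strongProd (cayleyGraph S₁) (cayleyGraph S₂) := by
    ext x y
    rw [cayleyGraph_adj, strongProd_adj]
    constructor
    · rintro ⟨hne, h⟩
      have hx : (∃ s₁ ∈ S₁, x.1 = s₁ * y.1) ∧ (∃ s₂ ∈ S₂, x.2 = s₂ * y.2) := by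
        rcases h with ⟨s, hs, he⟩ | ⟨s, hs, he⟩
        · rw [Set.mem_prod] at hs
          rw [Prod.ext_iff] at he
          exact ⟨⟨s.1, hs.1, he.1⟩, ⟨s.2, hs.2, he.2⟩⟩
        · rw [Set.mem_prod] at hs
          rw [Prod.ext_iff] at he
          exact ⟨⟨s.1⁻¹, hS₁symm _ hs.1, eq_inv_mul_iff_mul_eq.mpr he.1.symm⟩,
                 ⟨s.2⁻¹, hS₂symm _ hs.2, eq_inv_mul_iff_mul_eq.mpr he.2.symm⟩⟩
      obtain ⟨⟨s₁, hs₁, he₁⟩, ⟨s₂, hs₂, he₂⟩⟩ := hx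
      by_cases h1 : x.1 = y.1 <;> by_cases h2 : x.2 = y.2
      · exact absurd (Prod.ext_iff.mpr ⟨h1, h2⟩) hne
      · exact Or.inl ⟨h1, (cayleyGraph_adj _ _ _).mpr ⟨h2, Or.inl ⟨s₂, hs₂, he₂⟩⟩⟩
      · exact Or.inr (Or.inl ⟨(cayleyGraph_adj _ _ _).mpr ⟨h1, Or.inl ⟨s₁, hs₁, he₁⟩⟩, h2⟩)
      · exact Or.inr (Or.inr ⟨(cayleyGraph_adj _ _ _).mpr ⟨h1, Or.inl ⟨s₁, hs₁, he₁⟩⟩,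
          (cayleyGraph_adj _ _ _).mpr ⟨h2, Or.inl ⟨s₂, hs₂, he₂⟩⟩⟩)
    · rintro (⟨h1, h2⟩ | ⟨h1, h2⟩ | ⟨h1, h2⟩)
      · obtain ⟨hne2, s₂, hs₂, he₂⟩ := cayleyGraph_adj' hS₂symm h2
        exact ⟨fun hc => hne2 (congrArg Prod.snd hc),
          Or.inl ⟨(1, s₂), Set.mem_prod.mpr ⟨hS₁one, hs₂⟩,
            Prod.ext_iff.mpr ⟨by rw [h1]; exact (one_mul y.1).symm, he₂⟩⟩⟩
      · obtain ⟨hne1, s₁, hs₁, he₁⟩ := cayleyGraph_adj' hS₁symm h1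
        exact ⟨fun hc => hne1 (congrArg Prod.fst hc),
          Or.inl ⟨(s₁, 1), Set.mem_prod.mpr ⟨hs₁, hS₂one⟩,
            Prod.ext_iff.mpr ⟨he₁, by rw [h2]; exact (one_mul y.2).symm⟩⟩⟩
      · obtain ⟨hne1, s₁, hs₁, he₁⟩ := cayleyGraph_adj' hS₁symm h1
        obtain ⟨hne2, s₂, hs₂, he₂⟩ := cayleyGraph_adj' hS₂symm h2
        exact ⟨fun hc => hne1 (congrArg Prod.fst hc),
          Or.inl ⟨(s₁, s₂), Set.mem_prod.mpr ⟨hs₁, hs₂⟩, Prod.ext_iff.mpr ⟨he₁, he₂⟩⟩⟩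
  refine ⟨hEq, fun Γ₁ hch hcov => ⟨ChordalAux.strongProd_top_isChordal hch, ?_⟩⟩
  rw [hEq]
  intro x y h
  rw [strongProd_adj] at h ⊢
  rcases h with ⟨h1, h2⟩ | ⟨h1, h2⟩ | ⟨h1, h2⟩
  · exact Or.inl ⟨h1, by rw [SimpleGraph.top_adj]; exact h2.ne⟩
  · exact Or.inr (Or.inl ⟨hcov h1, h2⟩)
  · exact Or.inr (Or.inr ⟨hcov h1, by rw [SimpleGraph.top_adj]; exact h2.ne⟩)
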